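/- Let A, B be m×m complex matrices, M, K be n×n complex matrices, τ a real number, and α, β, ω real numbers with α + β ≠ 0 and ω ≠ 2. Define P(α,β,ω) = (2/((α+β)(2−ω)))·(A+αB)⊗(τK+βM) and R(α,β,ω) = (2/((α+β)(2−ω)))·[(A−βB)⊗(τK−αM) + ((α+β)ω/2)·(A+αB)⊗M + ((α+β)ω/2)·B⊗(τK−αM)]. Then P(α,β,ω) − R(α,β,ω) = A⊗M + τ·B⊗K. -/

import Mathlib

/-! Expanding bilinearly, the Kronecker product inside `P` minus the first term of `R` is
`(α+β)·Q`, and the two `ω`-terms of `R` add up to `((α+β)ω/2)·Q`. Hence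
`P − R = c·((α+β) − (α+β)ω/2)·Q` with `c = 2/((α+β)(2−ω))`, and this scalar is `1`. -/

open Matrix Kronecker

/-- The MSKP preconditioner
`P(α,β,ω) = (2/((α+β)(2−ω)))·(A+αB)⊗(τK+βM)`. -/
noncomputable def mskpP {m n : ℕ} (A B : Matrix (Fin m) (Fin m) ℂ)
    (M K : Matrix (Fin n) (Fin n) ℂ) (τ α β ω : ℝ) :
    Matrix (Fin m × Fin n) (Fin m × Fin n) ℂ :=
  ((2 / ((α + β) * (2 - ω)) : ℝ) : ℂ) •
    ((A + (α : ℂ) • B) ⊗ₖ ((τ : ℂ) • K + (β : ℂ) • M))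

/-- The matrix `R(α,β,ω)` in the MSKP splitting `Q = P(α,β,ω) − R(α,β,ω)`. -/
noncomputable def mskpR {m n : ℕ} (A B : Matrix (Fin m) (Fin m) ℂ)
    (M K : Matrix (Fin n) (Fin n) ℂ) (τ α β ω : ℝ) :
    Matrix (Fin m × Fin n) (Fin m × Fin n) ℂ :=
  ((2 / ((α + β) * (2 - ω)) : ℝ) : ℂ) •
    ((A - (β : ℂ) • B) ⊗ₖ ((τ : ℂ) • K - (α : ℂ) • M)
      + (((α + β) * ω / 2 : ℝ) : ℂ) • ((A + (α : ℂ) • B) ⊗ₖ M)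
      + (((α + β) * ω / 2 : ℝ) : ℂ) • (B ⊗ₖ ((τ : ℂ) • K - (α : ℂ) • M)))

namespace Matrix

variable {R ι κ : Type*} [CommRing R]

theorem add_smul_kronecker_sub_sub_smul_kronecker (A B : Matrix ι ι R) (M K : Matrix κ κ R)
    (a b t : R) :
    (A + a • B) ⊗ₖ (t • K + b • M) - (A - b • B) ⊗ₖ (t • K - a • M)
      = (a + b) • (A ⊗ₖ M + t • (B ⊗ₖ K)) := by
  ext ⟨i, j⟩ ⟨k, l⟩
  simp only [sub_apply, add_apply, smul_apply, kronecker_apply, smul_eq_mul]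
  ring

theorem add_smul_kronecker_add_kronecker_sub_smul (A B : Matrix ι ι R) (M K : Matrix κ κ R)
    (a t : R) :
    (A + a • B) ⊗ₖ M + B ⊗ₖ (t • K - a • M) = A ⊗ₖ M + t • (B ⊗ₖ K) := by
  ext ⟨i, j⟩ ⟨k, l⟩
  simp only [sub_apply, add_apply, smul_apply, kronecker_apply, smul_eq_mul]
  ring

end Matrix

/-- The MSKP splitting: `P(α,β,ω) − R(α,β,ω) = Q = A⊗M + τ·B⊗K`. -/
theorem mskp_splitting {m n : ℕ} (A B : Matrix (Fin m) (Fin m) ℂ)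
    (M K : Matrix (Fin n) (Fin n) ℂ) (τ α β ω : ℝ)
    (hαβ : α + β ≠ 0) (hω : ω ≠ 2) :
    mskpP A B M K τ α β ω - mskpR A B M K τ α β ω
      = A ⊗ₖ M + (τ : ℂ) • (B ⊗ₖ K) := by
  have hscalar : 2 / ((α + β) * (2 - ω)) * ((α + β) - (α + β) * ω / 2) = 1 := by
    have h2ω : 2 - ω ≠ 0 := sub_ne_zero.mpr (Ne.symm hω)
    field_simp
  rw [mskpP, mskpR, ← smul_sub, add_assoc, ← smul_add, sub_add_eq_sub_sub,
    add_smul_kronecker_sub_sub_smul_kronecker, add_smul_kronecker_add_kronecker_sub_smul,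
    ← sub_smul, smul_smul]
  convert one_smul ℂ (A ⊗ₖ M + (τ : ℂ) • (B ⊗ₖ K))
  exact_mod_cast hscalar
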